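/- Let c₁₁, c₁₂, c₃₃, c₄₄ ∈ ℝ, set c₆₆ = (c₁₁ − c₁₂)/2, and let C be the fourth-order tensor determined through the Voigt map by the symmetric 6×6 matrix whose rows are (c₁₁, c₁₂, −c₄₄, 0,0,0), (c₁₂, c₁₁, −c₄₄, 0,0,0), (−c₄₄, −c₄₄, c₃₃, 0,0,0), (0,0,0,c₄₄,0,0), (0,0,0,0,c₄₄,0), (0,0,0,0,0,c₆₆) (Medium II). Then for every n = (n₁,n₂,n₃) ∈ ℝ³ the Christoffel matrix Γ(n) equals [[c₁₁n₁² + c₆₆n₂² + c₄₄n₃², (c₁₁−c₆₆)n₁n₂, 0], [(c₁₁−c₆₆)n₁n₂, c₆₆n₁² + c₁₁n₂² + c₄₄n₃², 0], [0, 0, c₄₄(n₁²+n₂²) + c₃₃n₃²]], and the vectors D₁ = (0,0,1), D₂ = (n₁,n₂,0), D₃ = (n₂,−n₁,0) satisfy Γ(n)D₁ = (c₄₄(n₁²+n₂²) + c₃₃n₃²)D₁, Γ(n)D₂ = (c₁₁(n₁²+n₂²) + c₄₄n₃²)D₂, and Γ(n)D₃ = (c₆₆(n₁²+n₂²) + c₄₄n₃²)D₃.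 -/
import Mathlib


open Finset

/-- The Voigt index map (0-based): `p(0,0)=0, p(1,1)=1, p(2,2)=2`,
`p(1,2)=p(2,1)=3, p(0,2)=p(2,0)=4, p(0,1)=p(1,0)=5`. -/
def voigt (i j : Fin 3) : Fin 6 :=
  if h : i = j then i.castLE (by norm_num)
  else ⟨6 - (i.1 + j.1), by
    have hij : i.1 ≠ j.1 := fun hc => h (Fin.ext hc)
    omega⟩


section consAux
variable {α : Type*}
@[local simp] lemma consval_6_2 (a : α) (s : Fin 5 → α) : Matrix.vecCons a s 2 = s 1 := rfl
@[local simp] lemma consval_6_3 (a : α) (s : Fin 5 → α) : Matrix.vecCons a s 3 = s 2 := rfl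
@[local simp] lemma consval_6_4 (a : α) (s : Fin 5 → α) : Matrix.vecCons a s 4 = s 3 := rfl
@[local simp] lemma consval_6_5 (a : α) (s : Fin 5 → α) : Matrix.vecCons a s 5 = s 4 := rfl
@[local simp] lemma consval_5_2 (a : α) (s : Fin 4 → α) : Matrix.vecCons a s 2 = s 1 := rfl
@[local simp] lemma consval_5_3 (a : α) (s : Fin 4 → α) : Matrix.vecCons a s 3 = s 2 := rfl
@[local simp] lemma consval_5_4 (a : α) (s : Fin 4 → α) : Matrix.vecCons a s 4 = s 3 := rfl
@[local simp] lemma consval_4_2 (a : α) (s : Fin 3 → α) : Matrix.vecCons a s 2 = s 1 := rfl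
@[local simp] lemma consval_4_3 (a : α) (s : Fin 3 → α) : Matrix.vecCons a s 3 = s 2 := rfl
@[local simp] lemma consval_3_2 (a : α) (s : Fin 2 → α) : Matrix.vecCons a s 2 = s 1 := rfl
end consAux

section voigtAux
@[local simp] lemma voigt00 : voigt 0 0 = 0 := by decide
@[local simp] lemma voigt11 : voigt 1 1 = 1 := by decide
@[local simp] lemma voigt22 : voigt 2 2 = 2 := by decide
@[local simp] lemma voigt12 : voigt 1 2 = 3 := by decide
@[local simp] lemma voigt21 : voigt 2 1 = 3 := by decide
@[local simp] lemma voigt02 : voigt 0 2 = 4 := by decide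
@[local simp] lemma voigt20 : voigt 2 0 = 4 := by decide
@[local simp] lemma voigt01 : voigt 0 1 = 5 := by decide
@[local simp] lemma voigt10 : voigt 1 0 = 5 := by decide
end voigtAux

/-- The fourth-order tensor determined by a 6×6 matrix through the Voigt map. -/
def ofVoigt (μ : Matrix (Fin 6) (Fin 6) ℝ) (i j k l : Fin 3) : ℝ :=
  μ (voigt i j) (voigt k l)

/-- The Christoffel matrix associated with a fourth-order tensor `C` on `ℝ³`,
with entries `Γ(n)_{ij} = Σ_{k,l} C_{kilj} n_k n_l`. -/
def christoffel (C : Fin 3 → Fin 3 → Fin 3 → Fin 3 → ℝ) (n : Fin 3 → ℝ) :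
    Matrix (Fin 3) (Fin 3) ℝ :=
  Matrix.of fun i j => ∑ k, ∑ l, C k i l j * n k * n l

/-- Medium II: a transversely isotropic medium with symmetry axis `e₃`,
`c₆₆ = (c₁₁ - c₁₂)/2`.  Its Christoffel matrix has the stated form and the
vectors `D₁ = (0,0,1)`, `D₂ = (n₁,n₂,0)`, `D₃ = (n₂,-n₁,0)` are eigenvectors
with the stated eigenvalues. -/
theorem mediumII_christoffel (c11 c12 c33 c44 c66 : ℝ)
    (hc66 : c66 = (c11 - c12) / 2) (n : Fin 3 → ℝ) :
    christoffel (ofVoigt !![c11, c12, -c44, 0, 0, 0;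
                            c12, c11, -c44, 0, 0, 0;
                            -c44, -c44, c33, 0, 0, 0;
                            0, 0, 0, c44, 0, 0;
                            0, 0, 0, 0, c44, 0;
                            0, 0, 0, 0, 0, c66]) n =
      !![c11 * n 0 ^ 2 + c66 * n 1 ^ 2 + c44 * n 2 ^ 2, (c11 - c66) * n 0 * n 1, 0;
         (c11 - c66) * n 0 * n 1, c66 * n 0 ^ 2 + c11 * n 1 ^ 2 + c44 * n 2 ^ 2, 0;
         0, 0, c44 * (n 0 ^ 2 + n 1 ^ 2) + c33 * n 2 ^ 2] ∧
    (christoffel (ofVoigt !![c11, c12, -c44, 0, 0, 0;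
                            c12, c11, -c44, 0, 0, 0;
                            -c44, -c44, c33, 0, 0, 0;
                            0, 0, 0, c44, 0, 0;
                            0, 0, 0, 0, c44, 0;
                            0, 0, 0, 0, 0, c66]) n).mulVec ![0, 0, 1] =
      (c44 * (n 0 ^ 2 + n 1 ^ 2) + c33 * n 2 ^ 2) • ![0, 0, 1] ∧
    (christoffel (ofVoigt !![c11, c12, -c44, 0, 0, 0;
                            c12, c11, -c44, 0, 0, 0;
                            -c44, -c44, c33, 0, 0, 0;
                            0, 0, 0, c44, 0, 0;
                            0, 0, 0, 0, c44, 0;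
                            0, 0, 0, 0, 0, c66]) n).mulVec ![n 0, n 1, 0] =
      (c11 * (n 0 ^ 2 + n 1 ^ 2) + c44 * n 2 ^ 2) • ![n 0, n 1, 0] ∧
    (christoffel (ofVoigt !![c11, c12, -c44, 0, 0, 0;
                            c12, c11, -c44, 0, 0, 0;
                            -c44, -c44, c33, 0, 0, 0;
                            0, 0, 0, c44, 0, 0;
                            0, 0, 0, 0, c44, 0;
                            0, 0, 0, 0, 0, c66]) n).mulVec ![n 1, -n 0, 0] =
      (c66 * (n 0 ^ 2 + n 1 ^ 2) + c44 * n 2 ^ 2) • ![n 1, -n 0, 0] := by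
  subst hc66
  have hΓ : christoffel (ofVoigt !![c11, c12, -c44, 0, 0, 0;
                            c12, c11, -c44, 0, 0, 0;
                            -c44, -c44, c33, 0, 0, 0;
                            0, 0, 0, c44, 0, 0;
                            0, 0, 0, 0, c44, 0;
                            0, 0, 0, 0, 0, (c11 - c12) / 2]) n =
      !![c11 * n 0 ^ 2 + (c11 - c12) / 2 * n 1 ^ 2 + c44 * n 2 ^ 2,
         (c11 - (c11 - c12) / 2) * n 0 * n 1, 0;
         (c11 - (c11 - c12) / 2) * n 0 * n 1,
         (c11 - c12) / 2 * n 0 ^ 2 + c11 * n 1 ^ 2 + c44 * n 2 ^ 2, 0;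
         0, 0, c44 * (n 0 ^ 2 + n 1 ^ 2) + c33 * n 2 ^ 2] := by
    ext i j
    fin_cases i <;> fin_cases j <;>
      simp [christoffel, ofVoigt, Fin.sum_univ_three, voigt00, voigt11, voigt22,
        voigt12, voigt21, voigt02, voigt20, voigt01, voigt10,
        consval_6_2, consval_6_3, consval_6_4, consval_6_5,
        consval_5_2, consval_5_3, consval_5_4, consval_4_2, consval_4_3, consval_3_2,
        Matrix.vecHead, Matrix.vecTail, Matrix.of_apply] <;> ring
  refine ⟨hΓ, ?_, ?_, ?_⟩ <;> rw [hΓ] <;> funext i <;> fin_cases i <;>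
    simp [Matrix.mulVec, dotProduct, Fin.sum_univ_three] <;> ring
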